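/- arXiv:2511.22514 — 2 statements merged into one kernel-verified Lean document; each statement's English description precedes it below -/
import Mathlib

section
/- The map φ_n from the free monoid on {1,...,n} to the monoid of n×n upper triangular tropical matrices, defined by φ_n(ε) = the tropical identity matrix and, for nonempty w, φ_n(w)_{p,q} = w_{p,q} (the maximum length of a weakly increasing subsequence of w with entries in [p,q]) when p ≤ q and -∞ when p > q, is a monoid homomorphism. -/
/-!
A weakly increasing subsequence of `u ++ v` with letters in `[p, q]` is the concatenation of
one of `u` with letters in `[p, k]` and one of `v` with letters in `[k, q]`, where `k` is the
last letter taken from `u` (or `p` if there is none); conversely any two such subsequences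
concatenate to one of `u ++ v`. Hence `(uv)_{p,q} = max_{p ≤ k ≤ q} (u_{p,k} + v_{k,q})`, which is
the `(p, q)` entry of the tropical product, since the entries below the diagonal are `-∞`.
The empty word is sent to the tropical identity, which is neutral for the product.
-/

/-- The maximum length of a weakly increasing subsequence of `w` all of whose
letters lie in the interval `[p, q]`. -/
def wis (w : List ℕ) (p q : ℕ) : ℕ :=
  ((w.sublists.filter (fun s => decide (s.Pairwise (· ≤ ·) ∧ ∀ a ∈ s, p ≤ a ∧ a ≤ q))).map
    List.length).foldr max 0

/-- The tropical representation `φ_n`: entries in the max-plus semiring ℕ ∪ {-∞},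
modelled as `WithBot ℕ`. -/
def phi (n : ℕ) (w : List ℕ) : Matrix (Fin n) (Fin n) (WithBot ℕ) := fun p q =>
  if w = [] then (if p = q then 0 else ⊥)
  else if (p : ℕ) ≤ q then ((wis w (p + 1) (q + 1) : ℕ) : WithBot ℕ) else ⊥

/-- Tropical (max-plus) matrix multiplication. -/
def tropMul {n : ℕ} (A B : Matrix (Fin n) (Fin n) (WithBot ℕ)) :
    Matrix (Fin n) (Fin n) (WithBot ℕ) := fun i j =>
  Finset.univ.sup (fun k : Fin n => A i k + B k j)

theorem List.foldr_max_bot_mem {α : Type*} [LinearOrder α] [OrderBot α] {l : List α}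
    (hl : l ≠ []) : l.foldr max ⊥ ∈ l :=
  List.maximum_mem (List.foldr_max_of_ne_nil hl).symm

section WeaklyIncreasing

variable {w u v s : List ℕ} {p q : ℕ}

theorem length_le_wis (hsub : s.Sublist w) (hsort : s.Pairwise (· ≤ ·))
    (hmem : ∀ a ∈ s, p ≤ a ∧ a ≤ q) : s.length ≤ wis w p q := by
  refine List.le_max_of_le (List.mem_map_of_mem (List.mem_filter.2 ⟨?_, ?_⟩)) le_rfl
  · exact List.mem_sublists.2 hsub
  · exact decide_eq_true ⟨hsort, hmem⟩

theorem exists_length_eq_wis (w : List ℕ) (p q : ℕ) :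
    ∃ s : List ℕ, s.Sublist w ∧ s.Pairwise (· ≤ ·) ∧ (∀ a ∈ s, p ≤ a ∧ a ≤ q) ∧
      s.length = wis w p q := by
  have hne : [] ∈ w.sublists.filter
      (fun s => decide (s.Pairwise (· ≤ ·) ∧ ∀ a ∈ s, p ≤ a ∧ a ≤ q)) := by
    simp
  obtain ⟨s, hs, hlen⟩ := List.mem_map.1 (List.foldr_max_bot_mem
    (List.ne_nil_of_mem (List.mem_map_of_mem (f := List.length) hne)))
  rw [List.mem_filter, List.mem_sublists, decide_eq_true_iff] at hs
  exact ⟨s, hs.1, hs.2.1, hs.2.2, hlen⟩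

theorem wis_add_wis_le_wis_append {k : ℕ} (hpk : p ≤ k) (hkq : k ≤ q) :
    wis u p k + wis v k q ≤ wis (u ++ v) p q := by
  obtain ⟨s, hsu, hsort, hmem, hs⟩ := exists_length_eq_wis u p k
  obtain ⟨t, htv, htsort, htmem, ht⟩ := exists_length_eq_wis v k q
  rw [← hs, ← ht, ← List.length_append]
  refine length_le_wis (hsu.append htv) ?_ ?_
  · exact List.pairwise_append.2
      ⟨hsort, htsort, fun a ha b hb => (hmem a ha).2.trans (htmem b hb).1⟩
  · simp only [List.mem_append]
    rintro a (ha | ha)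
    · exact ⟨(hmem a ha).1, (hmem a ha).2.trans hkq⟩
    · exact ⟨hpk.trans (htmem a ha).1, (htmem a ha).2⟩

theorem exists_wis_append_le_wis_add_wis (hpq : p ≤ q) :
    ∃ k, p ≤ k ∧ k ≤ q ∧ wis (u ++ v) p q ≤ wis u p k + wis v k q := by
  obtain ⟨r, hsub, hsort, hmem, hlen⟩ := exists_length_eq_wis (u ++ v) p q
  obtain ⟨s, t, rfl, hsu, htv⟩ := List.sublist_append_iff.1 hsub
  obtain ⟨hs, ht, hst⟩ := List.pairwise_append.1 hsort
  simp only [List.mem_append] at hmem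
  suffices ∃ k, p ≤ k ∧ k ≤ q ∧ (∀ a ∈ s, a ≤ k) ∧ ∀ b ∈ t, k ≤ b by
    obtain ⟨k, hpk, hkq, hsk, hkt⟩ := this
    refine ⟨k, hpk, hkq, ?_⟩
    rw [← hlen, List.length_append]
    exact add_le_add
      (length_le_wis hsu hs fun a ha => ⟨(hmem a (.inl ha)).1, hsk a ha⟩)
      (length_le_wis htv ht fun b hb => ⟨hkt b hb, (hmem b (.inr hb)).2⟩)
  rcases eq_or_ne s [] with rfl | hne
  · exact ⟨p, le_rfl, hpq, by simp, fun b hb => (hmem b (.inr hb)).1⟩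
  · have hlast := s.getLast_mem hne
    exact ⟨_, (hmem _ (.inl hlast)).1, (hmem _ (.inl hlast)).2, fun a ha => hs.rel_getLast ha,
      hst _ hlast⟩

end WeaklyIncreasing

def tropOne (n : ℕ) : Matrix (Fin n) (Fin n) (WithBot ℕ) := fun p q => if p = q then 0 else ⊥

theorem tropMul_tropOne_left {n : ℕ} (A : Matrix (Fin n) (Fin n) (WithBot ℕ)) :
    tropMul (tropOne n) A = A := by
  ext i j
  simp [tropMul, tropOne, ite_add, Finset.sup_ite, Finset.filter_eq]

theorem tropMul_tropOne_right {n : ℕ} (A : Matrix (Fin n) (Fin n) (WithBot ℕ)) :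
    tropMul A (tropOne n) = A := by
  ext i j
  simp [tropMul, tropOne, add_ite, Finset.sup_ite, Finset.filter_eq']

section Phi

variable {n : ℕ} {w u v : List ℕ}

theorem phi_nil (n : ℕ) : phi n [] = tropOne n := rfl

theorem phi_apply_of_ne_nil (hw : w ≠ []) (p q : Fin n) :
    phi n w p q = if (p : ℕ) ≤ q then ((wis w (p + 1) (q + 1) : ℕ) : WithBot ℕ) else ⊥ :=
  if_neg hw

theorem phi_apply_add_phi_apply_le (hu : u ≠ []) (hv : v ≠ []) (p k q : Fin n) :
    phi n u p k + phi n v k q ≤ phi n (u ++ v) p q := by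
  have huv : u ++ v ≠ [] := by simp [hu]
  simp only [phi_apply_of_ne_nil hu, phi_apply_of_ne_nil hv, phi_apply_of_ne_nil huv]
  by_cases hpkq : (p : ℕ) ≤ k ∧ (k : ℕ) ≤ q
  · obtain ⟨hpk, hkq⟩ := hpkq
    simp only [hpk, hkq, hpk.trans hkq, if_true]
    exact_mod_cast wis_add_wis_le_wis_append (by omega) (by omega)
  · rcases not_and_or.1 hpkq with h | h <;> simp [h]

theorem exists_phi_append_apply_le (hu : u ≠ []) (hv : v ≠ []) (p q : Fin n) :
    ∃ k, phi n (u ++ v) p q ≤ phi n u p k + phi n v k q := by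
  have huv : u ++ v ≠ [] := by simp [hu]
  simp only [phi_apply_of_ne_nil hu, phi_apply_of_ne_nil hv, phi_apply_of_ne_nil huv]
  by_cases hpq : (p : ℕ) ≤ q
  · obtain ⟨k, hpk, hkq, hle⟩ := exists_wis_append_le_wis_add_wis
      (Nat.add_le_add_right hpq 1)
    refine ⟨⟨k - 1, by omega⟩, ?_⟩
    rw [if_pos hpq, if_pos (by simp; omega), if_pos (by simp; omega), Fin.val_mk,
      Nat.sub_add_cancel (by omega)]
    exact_mod_cast hle
  · exact ⟨p, by simp [hpq]⟩

theorem phi_append (hu : u ≠ []) (hv : v ≠ []) :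
    phi n (u ++ v) = tropMul (phi n u) (phi n v) := by
  ext p q
  obtain ⟨k, hk⟩ := exists_phi_append_apply_le hu hv p q
  exact le_antisymm (hk.trans (Finset.le_sup (f := fun k => phi n u p k + phi n v k q)
    (Finset.mem_univ k))) (Finset.sup_le fun k _ => phi_apply_add_phi_apply_le hu hv p k q)

end Phi

theorem stmt1 (n : ℕ) :
    (phi n [] = fun p q : Fin n => if p = q then (0 : WithBot ℕ) else ⊥) ∧
      ∀ u v : List ℕ, (∀ a ∈ u, 1 ≤ a ∧ a ≤ n) → (∀ a ∈ v, 1 ≤ a ∧ a ≤ n) →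
        phi n (u ++ v) = tropMul (phi n u) (phi n v) := by
  refine ⟨phi_nil n, fun u v _ _ => ?_⟩
  rcases eq_or_ne u [] with rfl | hu
  · rw [List.nil_append, phi_nil, tropMul_tropOne_left]
  rcases eq_or_ne v [] with rfl | hv
  · rw [List.append_nil, phi_nil, tropMul_tropOne_right]
  exact phi_append hu hv
end

section
/- Let u, v, w be words over {1,...,n} and let y be the least letter occurring in w. Suppose the number of occurrences of y in w is at least the length of v, and every letter x of v and every letter z of u satisfy x < y ≤ z. Then for all 1 ≤ p ≤ q ≤ n, the maximum length of a weakly increasing subsequence with entries in [p,q] is the same in the word wuv as in the word wvu. -/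
open List

def IsWeaklyIncreasingIn (p q : ℕ) (s : List ℕ) : Prop :=
  s.Pairwise (· ≤ ·) ∧ ∀ a ∈ s, p ≤ a ∧ a ≤ q

section wis

variable {p q : ℕ}

lemma length_mem_wis_candidates {s w : List ℕ} (hs : s <+ w) (hinc : IsWeaklyIncreasingIn p q s) :
    s.length ∈ (w.sublists.filter
      (fun s => decide (s.Pairwise (· ≤ ·) ∧ ∀ a ∈ s, p ≤ a ∧ a ≤ q))).map List.length :=
  mem_map_of_mem (mem_filter.2 ⟨mem_sublists.2 hs, decide_eq_true hinc⟩)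

lemma le_wis {s w : List ℕ} (hs : s <+ w) (hinc : IsWeaklyIncreasingIn p q s) :
    s.length ≤ wis w p q :=
  le_max_of_le (length_mem_wis_candidates hs hinc) le_rfl

lemma exists_sublist_length_eq_wis (w : List ℕ) :
    ∃ s, s <+ w ∧ IsWeaklyIncreasingIn p q s ∧ s.length = wis w p q := by
  -- `[]` is always a candidate, so the maximum over the candidates is attained.
  have hnil : IsWeaklyIncreasingIn p q [] := ⟨Pairwise.nil, by simp⟩
  obtain ⟨s, hs, hlen⟩ := mem_map.1 <| maximum_mem <| (foldr_max_of_ne_nil <|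
    ne_nil_of_mem <| length_mem_wis_candidates (nil_sublist w) hnil).symm
  obtain ⟨hsw, hinc⟩ := mem_filter.1 hs
  have hinc := of_decide_eq_true hinc
  exact ⟨s, mem_sublists.1 hsw, hinc, hlen⟩

lemma wis_le_wis {w₁ w₂ : List ℕ}
    (h : ∀ s, s <+ w₁ → IsWeaklyIncreasingIn p q s →
      ∃ t, t <+ w₂ ∧ IsWeaklyIncreasingIn p q t ∧ s.length ≤ t.length) :
    wis w₁ p q ≤ wis w₂ p q := by
  obtain ⟨s, hs, hinc, hlen⟩ := exists_sublist_length_eq_wis (p := p) (q := q) w₁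
  obtain ⟨t, ht, htinc, hst⟩ := h s hs hinc
  exact hlen ▸ hst.trans (le_wis ht htinc)

end wis

section swap

variable {u v w s : List ℕ}

lemma sublist_append_swap_of_pairwise (hvu : ∀ x ∈ v, ∀ z ∈ u, x < z)
    (hs : s <+ w ++ u ++ v) (hsort : s.Pairwise (· ≤ ·)) : s <+ w ++ v ++ u := by
  obtain ⟨s₁₂, s₃, rfl, h₁₂, h₃⟩ := sublist_append_iff.1 hs
  obtain ⟨s₁, s₂, rfl, h₁, h₂⟩ := sublist_append_iff.1 h₁₂
  rcases eq_or_ne s₂ [] with rfl | hs₂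
  · simpa using (h₁.append h₃).trans (sublist_append_left (w ++ v) u)
  rcases eq_or_ne s₃ [] with rfl | hs₃
  · simpa using (h₁.trans (sublist_append_left w v)).append h₂
  obtain ⟨b, hb⟩ := exists_mem_of_ne_nil s₂ hs₂
  obtain ⟨c, hc⟩ := exists_mem_of_ne_nil s₃ hs₃
  have hbc : b ≤ c := (pairwise_append.1 hsort).2.2 b (mem_append_right _ hb) c hc
  exact absurd hbc (hvu c (h₃.subset hc) b (h₂.subset hb)).not_ge

lemma exists_sublist_append_swap {p q y : ℕ} (hymin : ∀ a ∈ w, y ≤ a)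
    (hcount : v.length ≤ w.count y) (hxz : ∀ x ∈ v, ∀ z ∈ u, x < y ∧ y ≤ z)
    (hs : s <+ w ++ v ++ u) (hinc : IsWeaklyIncreasingIn p q s) :
    ∃ t, t <+ w ++ u ++ v ∧ IsWeaklyIncreasingIn p q t ∧ s.length ≤ t.length := by
  obtain ⟨s₁₂, s₃, rfl, h₁₂, h₃⟩ := sublist_append_iff.1 hs
  obtain ⟨s₁, s₂, rfl, h₁, h₂⟩ := sublist_append_iff.1 h₁₂
  rcases eq_or_ne s₂ [] with rfl | hs₂
  · refine ⟨s₁ ++ s₃, ?_, by simpa using hinc, by simp⟩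
    exact (h₁.append h₃).trans (sublist_append_left _ v)
  rcases eq_or_ne s₃ [] with rfl | hs₃
  · refine ⟨s₁ ++ s₂, ?_, by simpa using hinc, by simp⟩
    simpa using (h₁.append (h₂.trans (sublist_append_right u v)))
  obtain ⟨hsort, hrange⟩ := hinc
  obtain ⟨b, hb⟩ := exists_mem_of_ne_nil s₂ hs₂
  obtain ⟨c, hc⟩ := exists_mem_of_ne_nil s₃ hs₃
  obtain ⟨hby, hyc⟩ := hxz b (h₂.subset hb) c (h₃.subset hc)
  have hs₁ : s₁ = [] := eq_nil_iff_forall_not_mem.2 fun a ha =>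
    ((hymin a (h₁.subset ha)).trans
      ((pairwise_append.1 (pairwise_append.1 hsort).1).2.2 a ha b hb)).not_gt hby
  subst hs₁
  have hy : p ≤ y ∧ y ≤ q :=
    ⟨(hrange b (by simp [hb])).1.trans hby.le, hyc.trans (hrange c (by simp [hc])).2⟩
  refine ⟨replicate s₂.length y ++ s₃, ?_, ⟨?_, ?_⟩, by simp⟩
  · exact ((replicate_sublist_iff.2 (h₂.length_le.trans hcount)).append h₃).trans
      (sublist_append_left _ v)
  · refine pairwise_append.2 ⟨pairwise_replicate.2 (Or.inr le_rfl),
      (pairwise_append.1 hsort).2.1, fun a ha z hz => ?_⟩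
    exact eq_of_mem_replicate ha ▸ (hxz b (h₂.subset hb) z (h₃.subset hz)).2
  · intro a ha
    rcases mem_append.1 ha with ha | ha
    · exact eq_of_mem_replicate ha ▸ hy
    · exact hrange a (by simp [ha])

end swap

theorem stmt6_general (u v w : List ℕ) (y : ℕ)
    (hymin : ∀ a ∈ w, y ≤ a)
    (hcount : v.length ≤ w.count y)
    (hxz : ∀ x ∈ v, ∀ z ∈ u, x < y ∧ y ≤ z)
    (p q : ℕ) :
    wis (w ++ u ++ v) p q = wis (w ++ v ++ u) p q := by
  have hvu : ∀ x ∈ v, ∀ z ∈ u, x < z := fun x hx z hz =>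
    (hxz x hx z hz).1.trans_le (hxz x hx z hz).2
  refine le_antisymm (wis_le_wis fun s hs hinc => ?_) (wis_le_wis fun s hs hinc => ?_)
  · exact ⟨s, sublist_append_swap_of_pairwise hvu hs hinc.1, hinc, le_rfl⟩
  · exact exists_sublist_append_swap hymin hcount hxz hs hinc

theorem stmt6 (n : ℕ) (u v w : List ℕ) (y : ℕ)
    (hu : ∀ a ∈ u, 1 ≤ a ∧ a ≤ n) (hv : ∀ a ∈ v, 1 ≤ a ∧ a ≤ n)
    (hw : ∀ a ∈ w, 1 ≤ a ∧ a ≤ n)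
    (hyw : y ∈ w) (hymin : ∀ a ∈ w, y ≤ a)
    (hcount : v.length ≤ w.count y)
    (hxz : ∀ x ∈ v, ∀ z ∈ u, x < y ∧ y ≤ z)
    (p q : ℕ) (hp : 1 ≤ p) (hpq : p ≤ q) (hq : q ≤ n) :
    wis (w ++ u ++ v) p q = wis (w ++ v ++ u) p q :=
  stmt6_general u v w y hymin hcount hxz p q
end
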